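/- arXiv:1701.00799 — 3 statements merged into one kernel-verified Lean document; each statement's English description precedes it below -/
import Mathlib

section
/- Let A(z) = ∑ A_n z^n and B(z) = ∑ B_n z^n be power series (with coefficients in a normed space) analytic on the open unit disk with A(1) = B(1) = 0 (i.e., ∑ A_n = ∑ B_n = 0), and suppose ‖A_n‖ ≤ K n^{-(β+1)} and ‖B_n‖ ≤ K n^{-(β+1)} for some β > 0 and K > 0. Define C(z) = (1-z)^{-1} A(z) B(z) with coefficients C_n. Then ‖C_n‖ = O(n^{-2β}) if 0 < β < 1, ‖C_n‖ = O((log n) n^{-2}) if β = 1, and ‖C_n‖ = O(n^{-(β+1)}) if β > 1. -/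
/-!
Write `S_A(m) = ∑_{k ≤ m} A_k`. Since `∑ A_k = 0`, `S_A(m) = -∑_{k > m} A_k = O(m^{-β})`, and
`C_n = ∑_{i ≤ n} A_i S_B(n - i)`. Splitting this sum at `M = n / 2` and summing by parts over
`i ≤ M` gives
`C_n = S_A(M) S_B(n - M) + ∑_{i < M} S_A(i) B_{n-i} + ∑_{j < n - M} A_{n-j} S_B(j)`,
in which every product has one factor of index at least `n / 2`. Hence
`‖C_n‖ ≲ n^{-2β} + n^{-(β+1)} ∑_{i < n} (i + 1)^{-β}`, and the three regimes are those of the last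
sum, which grows like `n^{1-β}`, like `log n`, or stays bounded.
-/

open Filter Asymptotics Finset

theorem sum_range_rpow_le_integral {r x₀ : ℝ} (hr : r ≤ 0) (hr1 : r ≠ -1) (hx₀ : 0 < x₀)
    (N : ℕ) :
    ∑ i ∈ range N, (x₀ + ↑(i + 1)) ^ r ≤ ((x₀ + N) ^ (r + 1) - x₀ ^ (r + 1)) / (r + 1) := by
  have hanti : AntitoneOn (fun x : ℝ => x ^ r) (Set.Icc x₀ (x₀ + N)) := fun x hx y _ hxy =>
    Real.rpow_le_rpow_of_nonpos (hx₀.trans_le hx.1) hxy hr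
  have hzero : (0 : ℝ) ∉ Set.uIcc x₀ (x₀ + N) := by
    rw [Set.uIcc_of_le (by simp)]
    exact fun h => hx₀.not_ge h.1
  exact hanti.sum_le_integral.trans_eq (integral_rpow (Or.inr ⟨hr1, hzero⟩))

theorem sum_range_rpow_neg_succ_le {β x₀ : ℝ} (hβ : 0 < β) (hx₀ : 0 < x₀) (N : ℕ) :
    ∑ i ∈ range N, (x₀ + ↑(i + 1)) ^ (-(β + 1)) ≤ x₀ ^ (-β) / β := by
  have h := sum_range_rpow_le_integral (r := -(β + 1)) (by linarith) (by linarith) hx₀ N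
  rw [show -(β + 1) + 1 = -β by ring] at h
  have : 0 ≤ (x₀ + N) ^ (-β) := by positivity
  calc _ ≤ _ := h
    _ = (x₀ ^ (-β) - (x₀ + N) ^ (-β)) / β := by rw [div_neg, ← neg_div, neg_sub]
    _ ≤ x₀ ^ (-β) / β := by gcongr; linarith

theorem sum_range_add_one_rpow_neg_le {β : ℝ} (hβ : 0 ≤ β) (hβ1 : β ≠ 1) (n : ℕ) :
    ∑ i ∈ range n, ((i : ℝ) + 1) ^ (-β) ≤ 1 + (((n : ℝ) + 1) ^ (1 - β) - 1) / (1 - β) := by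
  have h := sum_range_rpow_le_integral (r := -β) (x₀ := 1) (by linarith)
    (fun h => hβ1 (by linarith)) one_pos n
  rw [Real.one_rpow, show -β + 1 = 1 - β by ring, add_comm 1 (n : ℝ)] at h
  calc ∑ i ∈ range n, ((i : ℝ) + 1) ^ (-β) ≤ ∑ i ∈ range (n + 1), ((i : ℝ) + 1) ^ (-β) :=
        sum_le_sum_of_subset_of_nonneg (range_subset_range.2 n.le_succ) fun i _ _ => by positivity
    _ = ∑ i ∈ range n, (1 + ↑(i + 1)) ^ (-β) + 1 := by
        rw [sum_range_succ']; simp [add_comm]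
    _ ≤ _ := by linarith

theorem rpow_le_two_rpow_mul_rpow {r x y : ℝ} (hr : r ≤ 0) (hy : 0 < y) (hyx : y ≤ 2 * x) :
    x ^ r ≤ 2 ^ (-r) * y ^ r := by
  have hx : 0 < x := by linarith
  calc x ^ r = 2 ^ (-r) * (2 * x) ^ r := by
        rw [Real.mul_rpow zero_le_two hx.le, ← mul_assoc, ← Real.rpow_add zero_lt_two]
        simp
    _ ≤ 2 ^ (-r) * y ^ r :=
        mul_le_mul_of_nonneg_left (Real.rpow_le_rpow_of_nonpos hy hyx hr) (by positivity)

theorem sum_range_rpow_mul_rpow_sub_le {β : ℝ} (hβ : 0 ≤ β) {L n : ℕ} (hL : 2 * L ≤ n + 2) :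
    ∑ i ∈ range L, ((i : ℝ) + 1) ^ (-β) * (((n - i : ℕ) : ℝ) + 1) ^ (-(β + 1)) ≤
      2 ^ (β + 1) * ((n : ℝ) + 1) ^ (-(β + 1)) * ∑ i ∈ range L, ((i : ℝ) + 1) ^ (-β) := by
  rw [mul_sum]
  refine sum_le_sum fun i hi => ?_
  have hin : 2 * i ≤ n := by have := mem_range.1 hi; omega
  rw [mul_comm]
  gcongr
  have := rpow_le_two_rpow_mul_rpow (x := ((n - i : ℕ) : ℝ) + 1) (y := (n : ℝ) + 1)
    (r := -(β + 1)) (by linarith) (by positivity)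
    (by exact_mod_cast (by omega : n + 1 ≤ 2 * (n - i + 1)))
  simpa using this

theorem rpow_mul_rpow_le_four_rpow_mul {β : ℝ} (hβ : 0 ≤ β) {m m' n : ℕ} (hm : n ≤ 2 * m + 1)
    (hm' : n ≤ 2 * m' + 1) :
    ((m : ℝ) + 1) ^ (-β) * ((m' : ℝ) + 1) ^ (-β) ≤ 4 ^ β * ((n : ℝ) + 1) ^ (-(2 * β)) := by
  have hhalf : ∀ k, n ≤ 2 * k + 1 → ((k : ℝ) + 1) ^ (-β) ≤ 2 ^ β * ((n : ℝ) + 1) ^ (-β) := by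
    intro k hk
    simpa using rpow_le_two_rpow_mul_rpow (r := -β) (by linarith) (by positivity)
      (by exact_mod_cast (by omega : n + 1 ≤ 2 * (k + 1)))
  calc _ ≤ (2 ^ β * ((n : ℝ) + 1) ^ (-β)) * (2 ^ β * ((n : ℝ) + 1) ^ (-β)) := by
        gcongr; exacts [hhalf m hm, hhalf m' hm']
    _ = 4 ^ β * ((n : ℝ) + 1) ^ (-(2 * β)) := by
        rw [show (4 : ℝ) = 2 * 2 by norm_num, Real.mul_rpow zero_le_two zero_le_two,
          show -(2 * β) = -β + -β by ring, Real.rpow_add (by positivity)]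
        ring

theorem isBigO_natCast_add_one_rpow {r : ℝ} (hr : r ≤ 0) :
    (fun n : ℕ => ((n : ℝ) + 1) ^ r) =O[atTop] fun n : ℕ => (n : ℝ) ^ r := by
  refine IsBigO.of_bound 1 ?_
  filter_upwards [eventually_ge_atTop 1] with n hn
  have hn' : (0 : ℝ) < n := by exact_mod_cast hn
  rw [Real.norm_of_nonneg (by positivity), Real.norm_of_nonneg (by positivity), one_mul]
  exact Real.rpow_le_rpow_of_nonpos hn' (by linarith) hr

theorem norm_le_mul_add_one_rpow {E : Type*} [SeminormedAddGroup E] {f : ℕ → E} {K r : ℝ}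
    (hr : r ≤ 0) (hf : ∀ n : ℕ, 1 ≤ n → ‖f n‖ ≤ K * (n : ℝ) ^ r) (n : ℕ) :
    ‖f n‖ ≤ (‖f 0‖ + 2 ^ (-r) * K) * ((n : ℝ) + 1) ^ r := by
  have hK : 0 ≤ K := by simpa using (norm_nonneg _).trans (hf 1 le_rfl)
  rcases Nat.eq_zero_or_pos n with rfl | hn
  · simp only [Nat.cast_zero, zero_add, Real.one_rpow, mul_one, le_add_iff_nonneg_right]
    positivity
  have hn' : (1 : ℝ) ≤ n := by exact_mod_cast hn
  calc ‖f n‖ ≤ K * (n : ℝ) ^ r := hf n hn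
    _ ≤ K * (2 ^ (-r) * ((n : ℝ) + 1) ^ r) := by
        gcongr; exact rpow_le_two_rpow_mul_rpow hr (by positivity) (by linarith)
    _ ≤ (‖f 0‖ + 2 ^ (-r) * K) * ((n : ℝ) + 1) ^ r := by
        rw [← mul_assoc, mul_comm K]; gcongr; exact le_add_of_nonneg_left (norm_nonneg _)

theorem norm_sum_range_le_of_hasSum_zero {E : Type*} [SeminormedAddCommGroup E] {f : ℕ → E}
    {a β : ℝ} (hβ : 0 < β) (hf : HasSum f 0)
    (hbd : ∀ n : ℕ, ‖f n‖ ≤ a * ((n : ℝ) + 1) ^ (-(β + 1))) (m : ℕ) :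
    ‖∑ k ∈ range (m + 1), f k‖ ≤ a / β * ((m : ℝ) + 1) ^ (-β) := by
  have ha : 0 ≤ a := by simpa using (norm_nonneg _).trans (hbd 0)
  have htail : HasSum (fun j => f (j + (m + 1))) (-∑ k ∈ range (m + 1), f k) := by
    simpa using (hasSum_nat_add_iff' (m + 1)).2 hf
  rw [← norm_neg]
  refine le_of_tendsto' htail.tendsto_sum_nat.norm fun N => ?_
  calc ‖∑ j ∈ range N, f (j + (m + 1))‖
      ≤ ∑ j ∈ range N, a * (((m : ℝ) + 1) + ↑(j + 1)) ^ (-(β + 1)) := by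
        refine (norm_sum_le _ _).trans (sum_le_sum fun j _ => (hbd _).trans_eq ?_)
        push_cast; ring_nf
    _ = a * ∑ j ∈ range N, (((m : ℝ) + 1) + ↑(j + 1)) ^ (-(β + 1)) := by rw [mul_sum]
    _ ≤ a * (((m : ℝ) + 1) ^ (-β) / β) := by
        gcongr; exact sum_range_rpow_neg_succ_le hβ (by positivity) N
    _ = a / β * ((m : ℝ) + 1) ^ (-β) := by ring

theorem norm_sum_range_le_of_norm_le {E : Type*} [SeminormedAddCommGroup E] {z : ℕ → E}
    {c β : ℝ} (hc : 0 ≤ c) (hβ : 0 ≤ β) {L n : ℕ} (hL : 2 * L ≤ n + 2) (hLn : L ≤ n)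
    (hz : ∀ i, ‖z i‖ ≤ c * (((i : ℝ) + 1) ^ (-β) * (((n - i : ℕ) : ℝ) + 1) ^ (-(β + 1)))) :
    ‖∑ i ∈ range L, z i‖ ≤
      c * 2 ^ (β + 1) * (((n : ℝ) + 1) ^ (-(β + 1)) * ∑ i ∈ range n, ((i : ℝ) + 1) ^ (-β)) := by
  have hmono : ∑ i ∈ range L, ((i : ℝ) + 1) ^ (-β) ≤ ∑ i ∈ range n, ((i : ℝ) + 1) ^ (-β) :=
    sum_le_sum_of_subset_of_nonneg (range_subset_range.2 hLn) fun i _ _ => by positivity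
  calc ‖∑ i ∈ range L, z i‖ ≤ ∑ i ∈ range L, ‖z i‖ := norm_sum_le _ _
    _ ≤ c * ∑ i ∈ range L, ((i : ℝ) + 1) ^ (-β) * (((n - i : ℕ) : ℝ) + 1) ^ (-(β + 1)) := by
        rw [mul_sum]; exact sum_le_sum fun i _ => hz i
    _ ≤ c * (2 ^ (β + 1) * ((n : ℝ) + 1) ^ (-(β + 1)) * ∑ i ∈ range n, ((i : ℝ) + 1) ^ (-β)) := by
        gcongr
        exact (sum_range_rpow_mul_rpow_sub_le hβ hL).trans (by gcongr)
    _ = _ := by ring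

theorem sum_range_mul_sum_range_sub_eq {R : Type*} [Ring R] (A B : ℕ → R) {M n : ℕ}
    (hM : M ≤ n) :
    ∑ i ∈ range (M + 1), A i * ∑ j ∈ range (n - i + 1), B j =
      (∑ k ∈ range (M + 1), A k) * ∑ j ∈ range (n - M + 1), B j +
        ∑ i ∈ range M, (∑ k ∈ range (i + 1), A k) * B (n - i) := by
  induction M with
  | zero => simp
  | succ M ih =>
    have hsplit : n - M + 1 = n - (M + 1) + 1 + 1 := by omega
    rw [sum_range_succ, ih (by omega), sum_range_succ A (M + 1),
      sum_range_succ (fun i => (∑ k ∈ range (i + 1), A k) * B (n - i)) M, hsplit,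
      sum_range_succ B (n - (M + 1) + 1), show n - (M + 1) + 1 = n - M by omega]
    noncomm_ring

theorem sum_range_sum_range_mul_eq {R : Type*} [Ring R] (A B : ℕ → R) {M n : ℕ}
    (hM : M ≤ n) :
    ∑ i ∈ range (n + 1), ∑ j ∈ range (n + 1 - i), A i * B j =
      (∑ k ∈ range (M + 1), A k) * ∑ j ∈ range (n - M + 1), B j +
        ∑ i ∈ range M, (∑ k ∈ range (i + 1), A k) * B (n - i) +
        ∑ j ∈ range (n - M), A (n - j) * ∑ k ∈ range (j + 1), B k := by
  have hrow : ∀ i ∈ range (n + 1),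
      ∑ j ∈ range (n + 1 - i), A i * B j = A i * ∑ j ∈ range (n - i + 1), B j := by
    intro i hi
    rw [mul_sum, show n + 1 - i = n - i + 1 by have := mem_range.1 hi; omega]
  rw [sum_congr rfl hrow, show n + 1 = M + 1 + (n - M) by omega, sum_range_add,
    sum_range_mul_sum_range_sub_eq A B hM,
    ← sum_range_reflect (fun j => A (n - j) * ∑ k ∈ range (j + 1), B k) (n - M)]
  congr 1
  refine sum_congr rfl fun j hj => ?_
  have := mem_range.1 hj
  rw [show n - M - 1 - j = n - (M + 1 + j) by omega,
    show n - (n - (M + 1 + j)) = M + 1 + j by omega]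

noncomputable def coeffMajorant (β : ℝ) (n : ℕ) : ℝ :=
  ((n : ℝ) + 1) ^ (-(2 * β)) + ((n : ℝ) + 1) ^ (-(β + 1)) * ∑ i ∈ range n, ((i : ℝ) + 1) ^ (-β)

theorem coeffMajorant_nonneg (β : ℝ) (n : ℕ) : 0 ≤ coeffMajorant β n := by
  unfold coeffMajorant; positivity

theorem isBigO_coeffMajorant {E : Type*} [NormedRing E] {A B : ℕ → E} {a b β : ℝ}
    (hβ : 0 < β) (hA : HasSum A 0) (hB : HasSum B 0)
    (hAbd : ∀ n : ℕ, ‖A n‖ ≤ a * ((n : ℝ) + 1) ^ (-(β + 1)))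
    (hBbd : ∀ n : ℕ, ‖B n‖ ≤ b * ((n : ℝ) + 1) ^ (-(β + 1))) :
    (fun n => ‖∑ i ∈ range (n + 1), ∑ j ∈ range (n + 1 - i), A i * B j‖) =O[atTop]
      coeffMajorant β := by
  have ha : 0 ≤ a := by simpa using (norm_nonneg _).trans (hAbd 0)
  have hb : 0 ≤ b := by simpa using (norm_nonneg _).trans (hBbd 0)
  have hSA := norm_sum_range_le_of_hasSum_zero hβ hA hAbd
  have hSB := norm_sum_range_le_of_hasSum_zero hβ hB hBbd
  set c₁ := a / β * (b / β) * 4 ^ β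
  set c₂ := a * b / β * 2 ^ (β + 1)
  refine isBigO_of_le' (c := c₁ + 2 * c₂) _ fun n => ?_
  set M := n / 2 with hM
  have hT₁ : ‖(∑ k ∈ range (M + 1), A k) * ∑ j ∈ range (n - M + 1), B j‖ ≤
      c₁ * ((n : ℝ) + 1) ^ (-(2 * β)) := by
    calc _ ≤ ‖∑ k ∈ range (M + 1), A k‖ * ‖∑ j ∈ range (n - M + 1), B j‖ := norm_mul_le _ _
      _ ≤ (a / β * ((M : ℝ) + 1) ^ (-β)) * (b / β * (((n - M : ℕ) : ℝ) + 1) ^ (-β)) := by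
          gcongr; exacts [hSA M, hSB _]
      _ = a / β * (b / β) * (((M : ℝ) + 1) ^ (-β) * (((n - M : ℕ) : ℝ) + 1) ^ (-β)) := by ring
      _ ≤ a / β * (b / β) * (4 ^ β * ((n : ℝ) + 1) ^ (-(2 * β))) := by
          gcongr _ * ?_
          exact rpow_mul_rpow_le_four_rpow_mul (m := M) (m' := n - M) hβ.le (by omega) (by omega)
      _ = c₁ * ((n : ℝ) + 1) ^ (-(2 * β)) := by ring
  have hT₂ : ‖∑ i ∈ range M, (∑ k ∈ range (i + 1), A k) * B (n - i)‖ ≤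
      c₂ * (((n : ℝ) + 1) ^ (-(β + 1)) * ∑ i ∈ range n, ((i : ℝ) + 1) ^ (-β)) := by
    refine norm_sum_range_le_of_norm_le (by positivity) hβ.le (by omega) (by omega) fun i => ?_
    calc _ ≤ ‖∑ k ∈ range (i + 1), A k‖ * ‖B (n - i)‖ := norm_mul_le _ _
      _ ≤ (a / β * ((i : ℝ) + 1) ^ (-β)) * (b * (((n - i : ℕ) : ℝ) + 1) ^ (-(β + 1))) := by
          gcongr; exacts [hSA i, hBbd _]
      _ = _ := by ring
  have hT₃ : ‖∑ j ∈ range (n - M), A (n - j) * ∑ k ∈ range (j + 1), B k‖ ≤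
      c₂ * (((n : ℝ) + 1) ^ (-(β + 1)) * ∑ i ∈ range n, ((i : ℝ) + 1) ^ (-β)) := by
    refine norm_sum_range_le_of_norm_le (by positivity) hβ.le (by omega) (by omega) fun j => ?_
    calc _ ≤ ‖A (n - j)‖ * ‖∑ k ∈ range (j + 1), B k‖ := norm_mul_le _ _
      _ ≤ (a * (((n - j : ℕ) : ℝ) + 1) ^ (-(β + 1))) * (b / β * ((j : ℝ) + 1) ^ (-β)) := by
          gcongr; exacts [hAbd _, hSB j]
      _ = _ := by ring
  rw [norm_norm, sum_range_sum_range_mul_eq A B (Nat.div_le_self n 2),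
    Real.norm_of_nonneg (coeffMajorant_nonneg β n), coeffMajorant]
  have hc₁ : 0 ≤ c₁ := by positivity
  have hc₂ : 0 ≤ c₂ := by positivity
  have hX : 0 ≤ ((n : ℝ) + 1) ^ (-(2 * β)) := by positivity
  have hY : 0 ≤ ((n : ℝ) + 1) ^ (-(β + 1)) * ∑ i ∈ range n, ((i : ℝ) + 1) ^ (-β) := by positivity
  calc _ ≤ _ := norm_add₃_le
    _ ≤ _ := add_le_add_three hT₁ hT₂ hT₃
    _ ≤ _ := by nlinarith [mul_nonneg hc₁ hY, mul_nonneg hc₂ hX]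

theorem coeffMajorant_isBigO_of_lt_one {β : ℝ} (hβ : 0 < β) (hβ1 : β < 1) :
    coeffMajorant β =O[atTop] fun n : ℕ => (n : ℝ) ^ (-(2 * β)) := by
  refine IsBigO.trans ?_ (isBigO_natCast_add_one_rpow (by linarith))
  refine isBigO_of_le' (c := 1 + (1 - β)⁻¹) _ fun n => ?_
  have hP := sum_range_add_one_rpow_neg_le hβ.le hβ1.ne n
  have hx : (1 : ℝ) ≤ (n : ℝ) + 1 := by linarith [n.cast_nonneg (α := ℝ)]
  have hpow : ((n : ℝ) + 1) ^ (-(β + 1)) * ((n : ℝ) + 1) ^ (1 - β) =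
      ((n : ℝ) + 1) ^ (-(2 * β)) := by
    rw [← Real.rpow_add (by positivity)]; ring_nf
  have hP' : ∑ i ∈ range n, ((i : ℝ) + 1) ^ (-β) ≤ (1 - β)⁻¹ * ((n : ℝ) + 1) ^ (1 - β) := by
    have h1 : (1 : ℝ) ≤ ((n : ℝ) + 1) ^ (1 - β) := Real.one_le_rpow hx (by linarith)
    have h2 : 0 < 1 - β := by linarith
    refine hP.trans (le_of_sub_nonneg ?_)
    rw [show (1 - β)⁻¹ * ((n : ℝ) + 1) ^ (1 - β) - (1 + (((n : ℝ) + 1) ^ (1 - β) - 1) / (1 - β))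
      = β / (1 - β) by field_simp; ring]
    positivity
  rw [Real.norm_of_nonneg (coeffMajorant_nonneg β n), Real.norm_of_nonneg (by positivity),
    coeffMajorant]
  calc _ ≤ ((n : ℝ) + 1) ^ (-(2 * β)) +
        ((n : ℝ) + 1) ^ (-(β + 1)) * ((1 - β)⁻¹ * ((n : ℝ) + 1) ^ (1 - β)) := by gcongr
    _ = _ := by rw [mul_left_comm, hpow]; ring

theorem coeffMajorant_one_isBigO :
    coeffMajorant 1 =O[atTop] fun n : ℕ => Real.log n * (n : ℝ) ^ (-2 : ℝ) := by
  have hmaj : coeffMajorant 1 =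
      fun n : ℕ => (1 + ∑ i ∈ range n, ((i : ℝ) + 1)⁻¹) * ((n : ℝ) + 1) ^ (-2 : ℝ) := by
    ext n; rw [coeffMajorant]; norm_num [Real.rpow_neg_one]; ring
  have hlog : (fun n : ℕ => 2 + Real.log n) =O[atTop] fun n : ℕ => Real.log n :=
    (Real.isLittleO_const_log_atTop.isBigO.add (isBigO_refl _ _)).natCast_atTop
  have hsum : (fun n : ℕ => 1 + ∑ i ∈ range n, ((i : ℝ) + 1)⁻¹) =O[atTop]
      fun n : ℕ => Real.log n := by
    refine IsBigO.trans (isBigO_of_le' (c := 1) _ fun n => ?_) hlog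
    have h := harmonic_le_one_add_log n
    push_cast [harmonic] at h
    rw [Real.norm_of_nonneg (by positivity), Real.norm_of_nonneg (by positivity), one_mul]
    linarith
  rw [hmaj]
  exact hsum.mul (isBigO_natCast_add_one_rpow (by norm_num))

theorem coeffMajorant_isBigO_of_one_lt {β : ℝ} (hβ : 1 < β) :
    coeffMajorant β =O[atTop] fun n : ℕ => (n : ℝ) ^ (-(β + 1)) := by
  refine IsBigO.trans ?_ (isBigO_natCast_add_one_rpow (by linarith))
  refine isBigO_of_le' (c := 2 + (β - 1)⁻¹) _ fun n => ?_
  have hP := sum_range_add_one_rpow_neg_le (by linarith) hβ.ne' n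
  have hx : (1 : ℝ) ≤ (n : ℝ) + 1 := by linarith [n.cast_nonneg (α := ℝ)]
  have hP' : ∑ i ∈ range n, ((i : ℝ) + 1) ^ (-β) ≤ 1 + (β - 1)⁻¹ := by
    have h1 : 0 ≤ ((n : ℝ) + 1) ^ (1 - β) := by positivity
    have h2 : β - 1 ≠ 0 := by linarith
    refine hP.trans (add_le_add_right ?_ 1)
    rw [div_le_iff_of_neg (by linarith), show (β - 1)⁻¹ * (1 - β) = -1 by field_simp; ring]
    linarith
  have hX : ((n : ℝ) + 1) ^ (-(2 * β)) ≤ ((n : ℝ) + 1) ^ (-(β + 1)) :=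
    Real.rpow_le_rpow_of_exponent_le hx (by linarith)
  rw [Real.norm_of_nonneg (coeffMajorant_nonneg β n), Real.norm_of_nonneg (by positivity),
    coeffMajorant]
  calc _ ≤ ((n : ℝ) + 1) ^ (-(β + 1)) + ((n : ℝ) + 1) ^ (-(β + 1)) * (1 + (β - 1)⁻¹) := by
        gcongr
    _ = _ := by ring

theorem coefficient_bounds_product_general
    {E : Type*} [NormedRing E]
    (A B : ℕ → E) (hA : HasSum A 0) (hB : HasSum B 0)
    (β K : ℝ) (hβ : 0 < β)
    (hAbd : ∀ n : ℕ, 1 ≤ n → ‖A n‖ ≤ K * (n : ℝ) ^ (-(β + 1)))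
    (hBbd : ∀ n : ℕ, 1 ≤ n → ‖B n‖ ≤ K * (n : ℝ) ^ (-(β + 1)))
    (C : ℕ → E)
    (hC : ∀ n, C n = ∑ i ∈ Finset.range (n + 1), ∑ j ∈ Finset.range (n + 1 - i), A i * B j) :
    (β < 1 → (fun n : ℕ => ‖C n‖) =O[atTop] fun n : ℕ => (n : ℝ) ^ (-(2 * β))) ∧
    (β = 1 → (fun n : ℕ => ‖C n‖) =O[atTop] fun n : ℕ => Real.log n * (n : ℝ) ^ (-2 : ℝ)) ∧
    (1 < β → (fun n : ℕ => ‖C n‖) =O[atTop] fun n : ℕ => (n : ℝ) ^ (-(β + 1))) := by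
  obtain rfl : C = _ := funext hC
  have hmaj := isBigO_coeffMajorant hβ hA hB (norm_le_mul_add_one_rpow (by linarith) hAbd)
    (norm_le_mul_add_one_rpow (by linarith) hBbd)
  refine ⟨fun h => hmaj.trans (coeffMajorant_isBigO_of_lt_one hβ h), fun h => ?_,
    fun h => hmaj.trans (coeffMajorant_isBigO_of_one_lt h)⟩
  subst h
  exact hmaj.trans coeffMajorant_one_isBigO

/-- Lemma A.1: if `A(1) = B(1) = 0` and `‖A_n‖, ‖B_n‖ ≤ K n^{-(β+1)}`, then the
coefficients `C_n = ∑_{i+j ≤ n} A_i B_j` of `C(z) = (1-z)⁻¹ A(z) B(z)` satisfy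
`‖C_n‖ = O(n^{-2β})` for `β < 1`, `O((log n) n^{-2})` for `β = 1`, and
`O(n^{-(β+1)})` for `β > 1`. -/
theorem coefficient_bounds_product
    {E : Type*} [NormedRing E]
    (A B : ℕ → E) (hA : HasSum A 0) (hB : HasSum B 0)
    (β K : ℝ) (hβ : 0 < β) (hK : 0 < K)
    (hAbd : ∀ n : ℕ, 1 ≤ n → ‖A n‖ ≤ K * (n : ℝ) ^ (-(β + 1)))
    (hBbd : ∀ n : ℕ, 1 ≤ n → ‖B n‖ ≤ K * (n : ℝ) ^ (-(β + 1)))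
    (C : ℕ → E)
    (hC : ∀ n, C n = ∑ i ∈ Finset.range (n + 1), ∑ j ∈ Finset.range (n + 1 - i), A i * B j) :
    (β < 1 → (fun n : ℕ => ‖C n‖) =O[atTop] fun n : ℕ => (n : ℝ) ^ (-(2 * β))) ∧
    (β = 1 → (fun n : ℕ => ‖C n‖) =O[atTop] fun n : ℕ => Real.log n * (n : ℝ) ^ (-2 : ℝ)) ∧
    (1 < β → (fun n : ℕ => ‖C n‖) =O[atTop] fun n : ℕ => (n : ℝ) ^ (-(β + 1))) :=
  coefficient_bounds_product_general A B hA hB β K hβ hAbd hBbd C hC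
end

section
/- Let a_n ≥ 0 with a_n = O(n^{-(β+1)}) for β > 0, and b_n ≥ 0 with b_n = o(∑_{j>n} g_j) where g_n ≥ 0 and ∑_{j>n} g_j is regularly varying of index -β (e.g., ∑_{j>n} g_j ~ C n^{-β}). Then the convolution c_n = ∑_{j=0}^n a_j b_{n-j} satisfies c_n = o(∑_{j>n} g_j). -/
/-!
Split `c n = ∑_{j ≤ n} a j * b (n - j)` at `j = n / 2`. On the lower half `n - j ≥ n / 2`, so
`‖b (n - j)‖ ≤ δ 2^β n^{-β}` uniformly and the summable weights `a j` cost only the factor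
`∑ ‖a j‖`. On the upper half `‖a j‖ ≲ n^{-(β+1)}`, while `∑_{k ≤ n} ‖b k‖ = o(n)` by Cesàro,
since `b → 0`. Finally `G ~ C n^{-β}` with `C ≠ 0` makes `G` and `n^{-β}` interchangeable
as comparison functions.
-/

open Filter Asymptotics Topology Finset

theorem natCast_rpow_neg_le_of_le_two_mul {m n : ℕ} {γ : ℝ} (hγ : 0 ≤ γ) (hn : 0 < n)
    (h : n ≤ 2 * m) : (m : ℝ) ^ (-γ) ≤ 2 ^ γ * (n : ℝ) ^ (-γ) := by
  have hm : (n : ℝ) / 2 ≤ m := by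
    rw [div_le_iff₀ two_pos]
    exact_mod_cast (by omega : n ≤ m * 2)
  calc (m : ℝ) ^ (-γ) ≤ ((n : ℝ) / 2) ^ (-γ) :=
        Real.rpow_le_rpow_of_nonpos (by positivity) hm (by linarith)
    _ = 2 ^ γ * (n : ℝ) ^ (-γ) := by
        rw [Real.div_rpow (Nat.cast_nonneg n) zero_le_two, Real.rpow_neg zero_le_two,
          div_eq_mul_inv, inv_inv, mul_comm]

theorem natCast_rpow_neg_add_one_le_of_lt_two_mul {j n : ℕ} {β : ℝ} (hβ : 0 ≤ β) (hn : 0 < n)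
    (h : n < 2 * j) :
    (j : ℝ) ^ (-(β + 1)) ≤ 2 ^ (β + 1) * ((n : ℝ) ^ (-β) * ((n + 1 : ℕ) : ℝ)⁻¹) := by
  have hn1 : (0 : ℝ) < ((n + 1 : ℕ) : ℝ) := by positivity
  have hpow : ((n + 1 : ℕ) : ℝ) ^ (-β) ≤ (n : ℝ) ^ (-β) :=
    Real.rpow_le_rpow_of_nonpos (by positivity) (by push_cast; linarith) (by linarith)
  calc (j : ℝ) ^ (-(β + 1)) ≤ 2 ^ (β + 1) * ((n + 1 : ℕ) : ℝ) ^ (-(β + 1)) :=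
        natCast_rpow_neg_le_of_le_two_mul (by linarith) n.succ_pos h
    _ = 2 ^ (β + 1) * (((n + 1 : ℕ) : ℝ) ^ (-β) * ((n + 1 : ℕ) : ℝ)⁻¹) := by
        rw [neg_add, Real.rpow_add hn1, Real.rpow_neg_one]
    _ ≤ 2 ^ (β + 1) * ((n : ℝ) ^ (-β) * ((n + 1 : ℕ) : ℝ)⁻¹) := by gcongr

section Convolution

variable {R : Type*} [SeminormedRing R] {a b : ℕ → R} {β : ℝ}

theorem isLittleO_sum_lower_half (hβ : 0 ≤ β) (ha : Summable fun n => ‖a n‖)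
    (hb : b =o[atTop] fun n : ℕ => (n : ℝ) ^ (-β)) :
    (fun n => ∑ j ∈ range (n + 1) with 2 * j ≤ n, a j * b (n - j)) =o[atTop]
      fun n : ℕ => (n : ℝ) ^ (-β) := by
  rw [isLittleO_iff]
  intro ε hε
  set A := ∑' n, ‖a n‖
  have hA : 0 ≤ A := tsum_nonneg fun _ => norm_nonneg _
  obtain ⟨N, hN⟩ := eventually_atTop.1 (hb.def (c := ε / (2 ^ β * (A + 1))) (by positivity))
  filter_upwards [eventually_ge_atTop (max (2 * N) 1)] with n hn
  have hn : 2 * N ≤ n ∧ 1 ≤ n := max_le_iff.1 hn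
  simp only [Real.norm_of_nonneg (Real.rpow_nonneg (Nat.cast_nonneg _) _)] at hN ⊢
  have hterm : ∀ j ∈ {j ∈ range (n + 1) | 2 * j ≤ n},
      ‖a j * b (n - j)‖ ≤ ‖a j‖ * (ε / (A + 1) * (n : ℝ) ^ (-β)) := by
    intro j hj
    have hj : 2 * j ≤ n := (mem_filter.1 hj).2
    calc ‖a j * b (n - j)‖ ≤ ‖a j‖ * ‖b (n - j)‖ := norm_mul_le _ _
      _ ≤ ‖a j‖ * (ε / (2 ^ β * (A + 1)) * (2 ^ β * (n : ℝ) ^ (-β))) := by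
        gcongr
        exact (hN _ (by omega)).trans
          (by gcongr; exact natCast_rpow_neg_le_of_le_two_mul hβ (by omega) (by omega))
      _ = ‖a j‖ * (ε / (A + 1) * (n : ℝ) ^ (-β)) := by field_simp
  calc ‖∑ j ∈ range (n + 1) with 2 * j ≤ n, a j * b (n - j)‖
      ≤ ∑ j ∈ range (n + 1) with 2 * j ≤ n, ‖a j‖ * (ε / (A + 1) * (n : ℝ) ^ (-β)) :=
        (norm_sum_le _ _).trans (sum_le_sum hterm)
    _ ≤ A * (ε / (A + 1) * (n : ℝ) ^ (-β)) := by
        rw [← sum_mul]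
        gcongr
        exact ha.sum_le_tsum _ fun _ _ => norm_nonneg _
    _ ≤ ε * (n : ℝ) ^ (-β) := by
        rw [← mul_assoc, mul_div_assoc']
        gcongr
        rw [div_le_iff₀ (by positivity)]
        nlinarith

theorem isLittleO_sum_upper_half (hβ : 0 ≤ β)
    (ha : a =O[atTop] fun n : ℕ => (n : ℝ) ^ (-(β + 1))) (hb : Tendsto b atTop (𝓝 0)) :
    (fun n => ∑ j ∈ range (n + 1) with ¬2 * j ≤ n, a j * b (n - j)) =o[atTop]
      fun n : ℕ => (n : ℝ) ^ (-β) := by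
  set s : ℕ → ℝ := fun n => ((n + 1 : ℕ) : ℝ)⁻¹ * ∑ k ∈ range (n + 1), ‖b k‖
  have hs : Tendsto s atTop (𝓝 0) := by
    have hbn : Tendsto (fun n => ‖b n‖) atTop (𝓝 0) := by simpa using hb.norm
    exact hbn.cesaro.comp (tendsto_add_atTop_nat 1)
  have hs' : (fun n : ℕ => (n : ℝ) ^ (-β) * s n) =o[atTop] fun n : ℕ => (n : ℝ) ^ (-β) := by
    simpa using (isBigO_refl (fun n : ℕ => (n : ℝ) ^ (-β)) atTop).mul_isLittleO
      ((isLittleO_one_iff ℝ).2 hs)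
  refine IsBigO.trans_isLittleO ?_ hs'
  obtain ⟨K, hK, hKa⟩ := ha.exists_pos
  obtain ⟨N, hN⟩ := eventually_atTop.1 hKa.bound
  refine IsBigO.of_bound (2 ^ (β + 1) * K) ?_
  filter_upwards [eventually_ge_atTop (max (2 * N) 1)] with n hn
  have hn : 2 * N ≤ n ∧ 1 ≤ n := max_le_iff.1 hn
  simp only [Real.norm_of_nonneg (Real.rpow_nonneg (Nat.cast_nonneg _) _)] at hN
  set w := 2 ^ (β + 1) * K * ((n : ℝ) ^ (-β) * ((n + 1 : ℕ) : ℝ)⁻¹)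
  have hw : 0 ≤ w := by positivity
  have hterm : ∀ j ∈ {j ∈ range (n + 1) | ¬2 * j ≤ n},
      ‖a j * b (n - j)‖ ≤ w * ‖b (n - j)‖ := by
    intro j hj
    have hj : n < 2 * j := not_le.1 (mem_filter.1 hj).2
    calc ‖a j * b (n - j)‖ ≤ ‖a j‖ * ‖b (n - j)‖ := norm_mul_le _ _
      _ ≤ K * (2 ^ (β + 1) * ((n : ℝ) ^ (-β) * ((n + 1 : ℕ) : ℝ)⁻¹)) * ‖b (n - j)‖ := by
        gcongr
        exact (hN j (by omega)).trans
          (by gcongr; exact natCast_rpow_neg_add_one_le_of_lt_two_mul hβ (by omega) hj)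
      _ = w * ‖b (n - j)‖ := by ring
  calc ‖∑ j ∈ range (n + 1) with ¬2 * j ≤ n, a j * b (n - j)‖
      ≤ ∑ j ∈ range (n + 1) with ¬2 * j ≤ n, w * ‖b (n - j)‖ :=
        (norm_sum_le _ _).trans (sum_le_sum hterm)
    _ ≤ ∑ j ∈ range (n + 1), w * ‖b (n - j)‖ :=
        sum_le_sum_of_subset_of_nonneg (filter_subset _ _) fun _ _ _ => by positivity
    _ = w * ∑ k ∈ range (n + 1), ‖b k‖ := by
        rw [← mul_sum, ← sum_range_reflect (fun k => ‖b k‖)]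
        simp
    _ = 2 ^ (β + 1) * K * ‖(n : ℝ) ^ (-β) * s n‖ := by
        rw [Real.norm_of_nonneg (by positivity)]
        ring

theorem isLittleO_convolution_rpow (hβ : 0 < β)
    (ha : a =O[atTop] fun n : ℕ => (n : ℝ) ^ (-(β + 1)))
    (hb : b =o[atTop] fun n : ℕ => (n : ℝ) ^ (-β)) :
    (fun n => ∑ j ∈ range (n + 1), a j * b (n - j)) =o[atTop] fun n : ℕ => (n : ℝ) ^ (-β) := by
  have ha_sum : Summable fun n => ‖a n‖ :=
    summable_of_isBigO_nat' (Real.summable_nat_rpow.2 (by linarith)) ha.norm_left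
  have hb_lim : Tendsto b atTop (𝓝 0) :=
    (isLittleO_one_iff ℝ).1 <| hb.trans <| (isLittleO_one_iff ℝ).2 <|
      (tendsto_rpow_neg_atTop hβ).comp tendsto_natCast_atTop_atTop
  exact ((isLittleO_sum_lower_half hβ.le ha_sum hb).add
    (isLittleO_sum_upper_half hβ.le ha hb_lim)).congr_left
      fun n => sum_filter_add_sum_filter_not _ _ _

end Convolution

theorem convolution_little_o_tail_general
    (a b : ℕ → ℝ)
    (β C : ℝ) (hβ : 0 < β) (hC : 0 < C)
    (haO : a =O[atTop] fun n : ℕ => (n : ℝ) ^ (-(β + 1)))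
    (G : ℕ → ℝ)
    (hbo : b =o[atTop] G)
    (hreg : G ~[atTop] fun n : ℕ => C * (n : ℝ) ^ (-β))
    (c : ℕ → ℝ) (hc : ∀ n, c n = ∑ j ∈ Finset.range (n + 1), a j * b (n - j)) :
    c =o[atTop] G := by
  have hG : G =Θ[atTop] fun n : ℕ => (n : ℝ) ^ (-β) :=
    hreg.isTheta.trans ((isTheta_const_mul_left hC.ne').2 (isTheta_refl _ _))
  rw [hG.isLittleO_congr_right] at hbo ⊢
  rw [funext hc]
  exact isLittleO_convolution_rpow hβ haO hbo

/-- Convolution preserves little-o against regularly varying tails: if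
`a_n = O(n^{-(β+1)})`, `b_n = o(G_n)` where `G_n = ∑_{j>n} g_j ~ C n^{-β}`, then
`c_n = ∑_{j=0}^n a_j b_{n-j} = o(G_n)`. -/
theorem convolution_little_o_tail
    (a b g : ℕ → ℝ) (ha0 : ∀ n, 0 ≤ a n) (hb0 : ∀ n, 0 ≤ b n) (hg0 : ∀ n, 0 ≤ g n)
    (β C : ℝ) (hβ : 0 < β) (hC : 0 < C)
    (haO : a =O[atTop] fun n : ℕ => (n : ℝ) ^ (-(β + 1)))
    (G : ℕ → ℝ) (hG : ∀ n, G n = ∑' j : ℕ, if n < j then g j else 0)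
    (hbo : b =o[atTop] G)
    (hreg : G ~[atTop] fun n : ℕ => C * (n : ℝ) ^ (-β))
    (c : ℕ → ℝ) (hc : ∀ n, c n = ∑ j ∈ Finset.range (n + 1), a j * b (n - j)) :
    c =o[atTop] G :=
  convolution_little_o_tail_general a b β C hβ hC haO G hbo hreg c hc
end

section
/- Fix β ∈ (0,1), set q = 1/(1+2β), and fix t ∈ (0,1). Then as n → ∞, (q/n^β) ∫_1^{(nt)^{1/q}} s^{-q(1+β)} (1 - s^q/n)^{-β} ds → ∫_0^t u^{β-1} (1-u)^{-β} du, with error O(n^{-β}). -/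
/-!
Substituting `u = s ^ q / n` turns the scaled integral exactly into
`∫ u in 1/n..t, u ^ (β - 1) * (1 - u) ^ (-β)`: the relation `q * (1 + 2 * β) = 1` is what makes
the powers of `s` and `n` match. The missing piece `∫ u in 0..1/n` is at most
`(1 - t) ^ (-β) * ∫ u in 0..1/n, u ^ (β - 1) = (1 - t) ^ (-β) * n ^ (-β) / β`.
-/

open Filter Asymptotics intervalIntegral Set Real

lemma rpow_neg_mul_one_sub_rpow_eq_comp_mul_deriv {β q n s : ℝ} (hqβ : q * (1 + 2 * β) = 1)
    (hn : 0 < n) (hs : 0 < s) :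
    q / n ^ β * (s ^ (-(q * (1 + β))) * (1 - s ^ q / n) ^ (-β)) =
      (s ^ q / n) ^ (β - 1) * (1 - s ^ q / n) ^ (-β) * (q * s ^ (q - 1) / n) := by
  have hs_exp : s ^ (-(q * (1 + β))) = s ^ (q * (β - 1)) * s ^ (q - 1) := by
    rw [← rpow_add hs]; congr 1; linarith
  have hn_exp : n ^ β = n ^ (β - 1) * n := by
    rw [← rpow_add_one hn.ne']; ring_nf
  rw [div_rpow (by positivity) hn.le, ← rpow_mul hs.le, hs_exp, hn_exp]
  field_simp

lemma intervalIntegrable_rpow_mul_one_sub_rpow {β a b : ℝ} (hβ : 0 < β) (ha : a < 1)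
    (hb : b < 1) :
    IntervalIntegrable (fun u ↦ u ^ (β - 1) * (1 - u) ^ (-β)) MeasureTheory.volume a b :=
  (intervalIntegrable_rpow' (by linarith)).mul_continuousOn <|
    (continuousOn_const.sub continuousOn_id).rpow_const fun u hu ↦
      Or.inl (sub_pos.2 (hu.2.trans_lt (max_lt ha hb))).ne'

theorem integral_rpow_neg_mul_one_sub_rpow_eq {β q n t : ℝ} (hq : 0 < q)
    (hqβ : q * (1 + 2 * β) = 1) (hn : 1 < n) (ht : t ∈ Ioo 0 1) :
    q / n ^ β *
        ∫ s in (1 : ℝ)..(n * t) ^ (1 / q), s ^ (-(q * (1 + β))) * (1 - s ^ q / n) ^ (-β)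
      = ∫ u in (1 / n)..t, u ^ (β - 1) * (1 - u) ^ (-β) := by
  have hn0 : 0 < n := one_pos.trans hn
  set X := (n * t) ^ (1 / q)
  have hnt : 0 < n * t := mul_pos hn0 ht.1
  have hXq : X ^ q = n * t := by
    rw [← rpow_mul hnt.le, one_div_mul_cancel hq.ne', rpow_one]
  have hpos : ∀ s ∈ uIcc 1 X, 0 < s := fun s hs ↦
    (lt_min one_pos (rpow_pos_of_pos hnt _)).trans_le hs.1
  have hmaps : ∀ s ∈ uIcc 1 X, s ^ q / n ∈ Ioo 0 1 := by
    intro s hs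
    refine ⟨by have := hpos s hs; positivity, (div_lt_one hn0).2 ?_⟩
    rcases le_max_iff.1 hs.2 with h | h
    · exact ((rpow_le_rpow (hpos s hs).le h hq.le).trans_eq (one_rpow q)).trans_lt hn
    · calc s ^ q ≤ X ^ q := rpow_le_rpow (hpos s hs).le h hq.le
        _ = n * t := hXq
        _ < n := mul_lt_of_lt_one_right hn0 ht.2
  have hderiv : ∀ s ∈ uIcc 1 X, HasDerivAt (fun s ↦ s ^ q / n) (q * s ^ (q - 1) / n) s :=
    fun s hs ↦ (hasDerivAt_rpow_const (Or.inl (hpos s hs).ne')).div_const n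
  have hderiv_cont : ContinuousOn (fun s ↦ q * s ^ (q - 1) / n) (uIcc 1 X) :=
    (continuousOn_const.mul (continuousOn_id.rpow_const fun s hs ↦
      Or.inl (hpos s hs).ne')).div_const n
  have hcont : ContinuousOn (fun u : ℝ ↦ u ^ (β - 1) * (1 - u) ^ (-β)) (Ioo 0 1) :=
    ContinuousOn.mul (continuousOn_id.rpow_const fun u (hu : u ∈ Ioo 0 1) ↦ Or.inl hu.1.ne')
      ((continuousOn_const.sub continuousOn_id).rpow_const fun u (hu : u ∈ Ioo 0 1) ↦
        Or.inl (sub_pos.2 hu.2).ne')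
  rw [← integral_const_mul, integral_congr fun s hs ↦
      rpow_neg_mul_one_sub_rpow_eq_comp_mul_deriv hqβ hn0 (hpos s hs)]
  refine (integral_comp_mul_deriv' hderiv hderiv_cont
    (hcont.mono (image_subset_iff.2 hmaps))).trans ?_
  simp only [one_rpow, hXq, mul_div_cancel_left₀ t hn0.ne']

lemma norm_integral_sub_integral_rpow_mul_one_sub_rpow_le {β a t : ℝ} (hβ : 0 < β)
    (ha : 0 ≤ a) (hat : a ≤ t) (ht : t < 1) :
    ‖(∫ u in a..t, u ^ (β - 1) * (1 - u) ^ (-β)) -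
        ∫ u in (0 : ℝ)..t, u ^ (β - 1) * (1 - u) ^ (-β)‖
      ≤ (1 - t) ^ (-β) / β * a ^ β := by
  have hint : ∀ b ≤ t, IntervalIntegrable (fun u ↦ u ^ (β - 1) * (1 - u) ^ (-β))
      MeasureTheory.volume 0 b := fun b hb ↦
    intervalIntegrable_rpow_mul_one_sub_rpow hβ (by linarith) (hb.trans_lt ht)
  rw [← integral_interval_sub_left (hint t le_rfl) (hint a hat), sub_sub_cancel_left, norm_neg,
    norm_of_nonneg (integral_nonneg ha fun u hu ↦ by
      have : u ≤ t := hu.2.trans hat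
      exact mul_nonneg (rpow_nonneg hu.1 _) (rpow_nonneg (by linarith) _))]
  calc ∫ u in (0 : ℝ)..a, u ^ (β - 1) * (1 - u) ^ (-β)
      ≤ ∫ u in (0 : ℝ)..a, (1 - t) ^ (-β) * u ^ (β - 1) := by
        refine integral_mono_on ha (hint a hat)
          ((intervalIntegrable_rpow' (by linarith)).const_mul _) fun u hu ↦ ?_
        rw [mul_comm]
        exact mul_le_mul_of_nonneg_right
          (rpow_le_rpow_of_nonpos (by linarith) (by linarith [hu.2]) (by linarith))
          (rpow_nonneg hu.1 _)
    _ = (1 - t) ^ (-β) / β * a ^ β := by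
        rw [integral_const_mul, integral_rpow (Or.inl (by linarith)), sub_add_cancel,
          zero_rpow hβ.ne']
        ring

theorem isBigO_integral_sub_integral_rpow_mul_one_sub_rpow {β q t : ℝ} (hβ : 0 < β)
    (hq : 0 < q) (hqβ : q * (1 + 2 * β) = 1) (ht : t ∈ Ioo 0 1) :
    (fun n : ℕ ↦ q / (n : ℝ) ^ β *
        (∫ s in (1 : ℝ)..((n : ℝ) * t) ^ (1 / q),
          s ^ (-(q * (1 + β))) * (1 - s ^ q / (n : ℝ)) ^ (-β)) -
        ∫ u in (0 : ℝ)..t, u ^ (β - 1) * (1 - u) ^ (-β))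
      =O[atTop] fun n : ℕ ↦ (n : ℝ) ^ (-β) := by
  refine IsBigO.of_bound ((1 - t) ^ (-β) / β) ?_
  filter_upwards [eventually_ge_atTop ⌈1 / t⌉₊] with n hn
  have htn : 1 / t ≤ n := Nat.ceil_le.1 hn
  have hn0 : (0 : ℝ) < n := (one_div_pos.2 ht.1).trans_le htn
  rw [integral_rpow_neg_mul_one_sub_rpow_eq hq hqβ ((one_lt_one_div ht.1 ht.2).trans_le htn) ht,
    norm_of_nonneg (rpow_nonneg hn0.le _), rpow_neg hn0.le, ← inv_rpow hn0.le, ← one_div]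
  exact norm_integral_sub_integral_rpow_mul_one_sub_rpow_le hβ (by positivity)
    ((one_div_le hn0 ht.1).2 htn) ht.2

/-- The key integral computation in the arcsine law: with `q = 1/(1+2β)` and `t ∈ (0,1)`,
`(q/n^β) ∫_1^{(nt)^{1/q}} s^{-q(1+β)} (1 - s^q/n)^{-β} ds → ∫_0^t u^{β-1}(1-u)^{-β} du`,
with error `O(n^{-β})`. -/
theorem arcsine_integral_limit
    (β : ℝ) (hβ : β ∈ Set.Ioo (0 : ℝ) 1)
    (q : ℝ) (hq : q = 1 / (1 + 2 * β))
    (t : ℝ) (ht : t ∈ Set.Ioo (0 : ℝ) 1) :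
    Tendsto
      (fun n : ℕ => (q / (n : ℝ) ^ β) *
        ∫ s in (1 : ℝ)..(((n : ℝ) * t) ^ (1 / q)),
          s ^ (-(q * (1 + β))) * (1 - s ^ q / (n : ℝ)) ^ (-β))
      atTop (nhds (∫ u in (0 : ℝ)..t, u ^ (β - 1) * (1 - u) ^ (-β))) ∧
    (fun n : ℕ =>
        (q / (n : ℝ) ^ β) *
          (∫ s in (1 : ℝ)..(((n : ℝ) * t) ^ (1 / q)),
            s ^ (-(q * (1 + β))) * (1 - s ^ q / (n : ℝ)) ^ (-β)) -
          ∫ u in (0 : ℝ)..t, u ^ (β - 1) * (1 - u) ^ (-β))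
      =O[atTop] fun n : ℕ => (n : ℝ) ^ (-β) := by
  have hβ0 := hβ.1
  have hq0 : 0 < q := by rw [hq]; positivity
  have hqβ : q * (1 + 2 * β) = 1 := by rw [hq]; field_simp
  have hBigO := isBigO_integral_sub_integral_rpow_mul_one_sub_rpow hβ0 hq0 hqβ ht
  have hdecay : Tendsto (fun n : ℕ ↦ (n : ℝ) ^ (-β)) atTop (nhds 0) :=
    (tendsto_rpow_neg_atTop hβ0).comp tendsto_natCast_atTop_atTop
  refine ⟨?_, hBigO⟩
  simpa using (hBigO.trans_tendsto hdecay).add_const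
    (∫ u in (0 : ℝ)..t, u ^ (β - 1) * (1 - u) ^ (-β))
end
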